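/- arXiv:2505.18203 — 3 statements merged into one kernel-verified Lean document; each statement's English description precedes it below -/
import Mathlib

section
/- The function $x\mapsto\log|x|$ is integrable with respect to the standard Gaussian measure $\mathcal N(0,1)$ on $\mathbb R$, and $\int_{\mathbb R}\log|x|\,d\mathcal N(0,1)(x) = -\tfrac{\gamma+\log 2}{2}$, where $\gamma$ is the Euler–Mascheroni constant. -/
open MeasureTheory ProbabilityTheory
open Real Set

lemma gammaDerivHalf :
    ∫ t : ℝ in Ioi 0, t ^ (-(1/2) : ℝ) * (Real.log t * Real.exp (-t))
      = -Real.sqrt π * (Real.eulerMascheroniConstant + 2 * Real.log 2) := by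
  set I : ℝ := ∫ t : ℝ in Ioi 0, t ^ (-(1/2) : ℝ) * (Real.log t * Real.exp (-t)) with hI
  have hC : HasDerivAt Complex.GammaIntegral
      (∫ t : ℝ in Ioi 0, (t : ℂ) ^ ((1/2 : ℂ) - 1) * (Real.log t * Real.exp (-t))) (1/2) :=
    Complex.hasDerivAt_GammaIntegral (by norm_num)
  have hval : (∫ t : ℝ in Ioi 0, (t : ℂ) ^ ((1/2 : ℂ) - 1) * (Real.log t * Real.exp (-t)))
      = (I : ℂ) := by
    have h1 : (∫ t : ℝ in Ioi 0, (t : ℂ) ^ ((1/2 : ℂ) - 1) * (Real.log t * Real.exp (-t)))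
        = ∫ t : ℝ in Ioi 0, ((t ^ (-(1/2) : ℝ) * (Real.log t * Real.exp (-t)) : ℝ) : ℂ) := by
      refine setIntegral_congr_fun measurableSet_Ioi fun t ht => ?_
      have ht' : (0:ℝ) ≤ t := le_of_lt ht
      rw [show ((1/2 : ℂ) - 1) = ((-(1/2) : ℝ) : ℂ) by norm_num, ← Complex.ofReal_cpow ht']
      push_cast
      ring
    rw [h1, hI]
    exact integral_ofReal
  rw [hval] at hC
  have hG : HasDerivAt Complex.Gamma ((I : ℂ)) (1/2) := by
    refine hC.congr_of_eventuallyEq ?_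
    have hopen : IsOpen {s : ℂ | 0 < s.re} := isOpen_lt continuous_const Complex.continuous_re
    filter_upwards [hopen.mem_nhds (by norm_num : (0:ℝ) < (1/2 : ℂ).re)] with s hs
    exact Complex.Gamma_eq_integral hs
  have hG' : HasDerivAt Complex.Gamma ((I : ℂ)) (((1:ℝ)/2 : ℝ) : ℂ) := by
    convert hG using 2; norm_num
  have hR : HasDerivAt Real.Gamma I ((1:ℝ)/2) := by
    have h2 := hG'.real_of_complex
    simp only [Complex.ofReal_re] at h2
    have : (fun x : ℝ => (Complex.Gamma (x : ℂ)).re) = Real.Gamma := by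
      funext x; rw [Complex.Gamma_ofReal, Complex.ofReal_re]
    rwa [this] at h2
  have h3 : HasDerivAt Real.Gamma (-√π * (Real.eulerMascheroniConstant + 2 * Real.log 2))
      ((1:ℝ)/2) := by
    have := Real.hasDerivAt_Gamma_one_half
    convert this using 2
  exact hR.unique h3

lemma integrableOn_neg_log_Ioc : IntegrableOn (fun x : ℝ => -Real.log x) (Ioc 0 1) := by
  have hcont : ContinuousOn (fun x : ℝ => x - x * Real.log x) (Icc 0 1) :=
    (continuous_id.sub Real.continuous_mul_log).continuousOn
  have hderiv : ∀ x ∈ Ioo (0:ℝ) 1, HasDerivAt (fun x : ℝ => x - x * Real.log x)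
      (-Real.log x) x := by
    intro x hx
    have h := (hasDerivAt_id x).sub (Real.hasDerivAt_mul_log hx.1.ne')
    exact h.congr_deriv (by ring)
  exact intervalIntegral.integrableOn_deriv_of_nonneg hcont hderiv
    (fun x hx => neg_nonneg.mpr (Real.log_nonpos hx.1.le hx.2.le))

lemma integrableOn_log_mul_exp {b : ℝ} (hb : 0 < b) :
    IntegrableOn (fun x : ℝ => Real.log x * Real.exp (-b * x ^ 2)) (Ioi 0) := by
  have hmeas : AEStronglyMeasurable (fun x : ℝ => Real.log x * Real.exp (-b * x ^ 2)) volume :=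
    (Real.measurable_log.mul (by measurability)).aestronglyMeasurable
  have h1 : IntegrableOn (fun x : ℝ => Real.log x * Real.exp (-b * x ^ 2)) (Ioc 0 1) := by
    refine Integrable.mono integrableOn_neg_log_Ioc hmeas.restrict ?_
    filter_upwards [ae_restrict_mem measurableSet_Ioc] with x hx
    rw [Real.norm_eq_abs, Real.norm_eq_abs, abs_neg, abs_mul]
    calc |Real.log x| * |Real.exp (-b * x ^ 2)| ≤ |Real.log x| * 1 := by
          gcongr
          rw [abs_of_pos (Real.exp_pos _)]
          exact Real.exp_le_one_iff.mpr (by nlinarith [sq_nonneg x])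
      _ = |Real.log x| := mul_one _
  have h2 : IntegrableOn (fun x : ℝ => Real.log x * Real.exp (-b * x ^ 2)) (Ioi 1) := by
    have hg : Integrable (fun x : ℝ => x * Real.exp (-b * x ^ 2)) := by
      have := integrable_rpow_mul_exp_neg_mul_sq hb (s := 1) (by norm_num)
      simpa using this
    refine Integrable.mono (hg.integrableOn) hmeas.restrict ?_
    filter_upwards [ae_restrict_mem measurableSet_Ioi] with x hx
    have hx1 : (1:ℝ) ≤ x := le_of_lt hx
    rw [Real.norm_eq_abs, Real.norm_eq_abs, abs_mul, abs_mul]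
    have : |Real.log x| ≤ |x| := by
      rw [abs_of_nonneg (Real.log_nonneg hx1), abs_of_nonneg (by linarith : (0:ℝ) ≤ x)]
      calc Real.log x ≤ x - 1 := Real.log_le_sub_one_of_pos (by linarith)
        _ ≤ x := by linarith
    gcongr
  have := h1.union h2
  rwa [Ioc_union_Ioi_eq_Ioi (by norm_num : (0:ℝ) ≤ 1)] at this

lemma integrable_log_abs_mul_exp {b : ℝ} (hb : 0 < b) :
    Integrable (fun x : ℝ => Real.log |x| * Real.exp (-b * x ^ 2)) := by
  have key : ∀ s : Set ℝ, MeasurableSet s →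
      IntegrableOn (fun x : ℝ => Real.log x * Real.exp (-b * x ^ 2)) s →
      True := fun _ _ _ => trivial
  have hIoi : IntegrableOn (fun x : ℝ => Real.log |x| * Real.exp (-b * x ^ 2)) (Ioi 0) := by
    refine (integrableOn_congr_fun (fun x hx => ?_) measurableSet_Ioi).mpr
      (integrableOn_log_mul_exp hb)
    rw [abs_of_pos hx]
  have hIic : IntegrableOn (fun x : ℝ => Real.log |x| * Real.exp (-b * x ^ 2)) (Iic 0) := by
    rw [← Measure.map_neg_eq_self (volume : Measure ℝ)]
    have m : MeasurableEmbedding fun x : ℝ => -x := (Homeomorph.neg ℝ).measurableEmbedding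
    rw [m.integrableOn_map_iff]
    have : ((fun x : ℝ => Real.log |x| * Real.exp (-b * x ^ 2)) ∘ fun x : ℝ => -x)
        = fun x : ℝ => Real.log |x| * Real.exp (-b * x ^ 2) := by
      funext x; simp [Function.comp, neg_sq]
    rw [this]
    simp only [neg_preimage, neg_Iic, neg_zero]
    exact Iff.mpr integrableOn_Ici_iff_integrableOn_Ioi hIoi
  have := hIic.union hIoi
  rwa [Iic_union_Ioi, integrableOn_univ] at this

-- step 1 : ∫ x in Ioi 0, log x * exp (-x^2) = I / 4
lemma step1 : ∫ x : ℝ in Ioi 0, Real.log x * Real.exp (-x ^ 2)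
    = (-Real.sqrt π * (Real.eulerMascheroniConstant + 2 * Real.log 2)) / 4 := by
  have hsub := integral_comp_rpow_Ioi_of_pos
    (g := fun t : ℝ => t ^ (-(1/2) : ℝ) * (Real.log t * Real.exp (-t))) (p := 2) (by norm_num)
  have hcongr : ∫ x : ℝ in Ioi 0,
      (2 * x ^ ((2:ℝ) - 1)) • ((x ^ (2:ℝ)) ^ (-(1/2) : ℝ) *
        (Real.log (x ^ (2:ℝ)) * Real.exp (-(x ^ (2:ℝ)))))
      = ∫ x : ℝ in Ioi 0, 4 * (Real.log x * Real.exp (-x ^ 2)) := by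
    refine setIntegral_congr_fun measurableSet_Ioi fun x hx => ?_
    have hx0 : (0:ℝ) < x := hx
    have hx2 : x ^ (2:ℝ) = x ^ 2 := by
      rw [show (2:ℝ) = ((2:ℕ):ℝ) by norm_num, Real.rpow_natCast]
    have hlog : Real.log (x ^ (2:ℝ)) = 2 * Real.log x := Real.log_rpow hx0 2
    have hpow : (x ^ (2:ℝ)) ^ (-(1/2) : ℝ) = x⁻¹ := by
      rw [← Real.rpow_mul hx0.le]
      norm_num
      exact Real.rpow_neg_one x
    rw [hlog, hpow, smul_eq_mul, show (2:ℝ) - 1 = 1 by norm_num, Real.rpow_one, hx2]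
    field_simp
    ring
  rw [hcongr] at hsub
  rw [integral_const_mul] at hsub
  rw [gammaDerivHalf] at hsub
  linarith
-- step 2 : ∫ x, log |x| * exp (-x^2) over ℝ = I / 2
lemma step2 : ∫ x : ℝ, Real.log |x| * Real.exp (-x ^ 2)
    = (-Real.sqrt π * (Real.eulerMascheroniConstant + 2 * Real.log 2)) / 2 := by
  have h := integral_comp_abs (f := fun x : ℝ => Real.log x * Real.exp (-x ^ 2))
  have h2 : ∫ x : ℝ, Real.log |x| * Real.exp (-|x| ^ 2)
      = ∫ x : ℝ, Real.log |x| * Real.exp (-x ^ 2) := by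
    congr 1; funext x; rw [sq_abs]
  rw [h2] at h
  rw [h, step1]; ring

-- step 3 : ∫ x, log |x| * exp (-(1/2) x^2) = √2 * √π * (-(γ + log 2)/2)
lemma step3 : ∫ x : ℝ, Real.log |x| * Real.exp (-(1/2) * x ^ 2)
    = Real.sqrt 2 * Real.sqrt π * (-(Real.eulerMascheroniConstant + Real.log 2) / 2) := by
  have hscale := MeasureTheory.Measure.integral_comp_mul_left
    (g := fun x : ℝ => Real.log |x| * Real.exp (-(1/2) * x ^ 2)) (Real.sqrt 2)
  have hs2 : (0:ℝ) < Real.sqrt 2 := Real.sqrt_pos.mpr (by norm_num)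
  have hsq : Real.sqrt 2 ^ 2 = 2 := Real.sq_sqrt (by norm_num)
  -- LHS of hscale equals ∫ (log √2 + log |x|) * exp(-x^2)
  have hfun : ∀ᵐ x : ℝ, Real.log |Real.sqrt 2 * x| * Real.exp (-(1/2) * (Real.sqrt 2 * x) ^ 2)
      = (Real.log (Real.sqrt 2) + Real.log |x|) * Real.exp (-x ^ 2) := by
    filter_upwards [compl_mem_ae_iff.mpr (Real.volume_singleton (a := (0:ℝ)))] with x hx
    have hx0 : x ≠ 0 := hx
    rw [abs_mul, abs_of_pos hs2, Real.log_mul hs2.ne' (abs_ne_zero.mpr hx0)]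
    congr 1
    rw [mul_pow, hsq]; ring_nf
  have hLHS : (∫ x : ℝ, Real.log |Real.sqrt 2 * x| * Real.exp (-(1/2) * (Real.sqrt 2 * x) ^ 2))
      = ∫ x : ℝ, (Real.log (Real.sqrt 2) + Real.log |x|) * Real.exp (-x ^ 2) := by
    exact integral_congr_ae hfun
  have hsplit : (∫ x : ℝ, (Real.log (Real.sqrt 2) + Real.log |x|) * Real.exp (-x ^ 2))
      = Real.log (Real.sqrt 2) * Real.sqrt π
        + (-Real.sqrt π * (Real.eulerMascheroniConstant + 2 * Real.log 2)) / 2 := by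
    have hint1 : Integrable (fun x : ℝ => Real.log (Real.sqrt 2) * Real.exp (-x ^ 2)) := by
      refine Integrable.const_mul ?_ _
      simpa using integrable_exp_neg_mul_sq (b := 1) (by norm_num)
    have hint2 : Integrable (fun x : ℝ => Real.log |x| * Real.exp (-x ^ 2)) := by
      simpa using integrable_log_abs_mul_exp (b := 1) (by norm_num)
    have : (fun x : ℝ => (Real.log (Real.sqrt 2) + Real.log |x|) * Real.exp (-x ^ 2))
        = fun x : ℝ => Real.log (Real.sqrt 2) * Real.exp (-x ^ 2)
          + Real.log |x| * Real.exp (-x ^ 2) := by funext x; ring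
    rw [this, integral_add hint1 hint2, integral_const_mul, step2]
    have hgauss : ∫ x : ℝ, Real.exp (-x ^ 2) = Real.sqrt π := by
      have := integral_gaussian 1
      simpa using this
    rw [hgauss]
  rw [hLHS, hsplit] at hscale
  rw [abs_of_pos (inv_pos.mpr hs2), smul_eq_mul] at hscale
  have : (∫ x : ℝ, Real.log |x| * Real.exp (-(1/2) * x ^ 2))
      = Real.sqrt 2 * (Real.log (Real.sqrt 2) * Real.sqrt π
        + (-Real.sqrt π * (Real.eulerMascheroniConstant + 2 * Real.log 2)) / 2) := by
    field_simp at hscale ⊢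
    linarith [hscale]
  rw [this, Real.log_sqrt (by norm_num : (0:ℝ) ≤ 2)]
  ring

/-- `log |x|` is integrable with respect to the standard Gaussian measure `𝒩(0,1)`, and
`∫ log |x| d𝒩(0,1)(x) = -(γ + log 2)/2`, where `γ` is the Euler–Mascheroni constant. -/
theorem integral_log_abs_gaussianReal :
    Integrable (fun x => Real.log |x|) (gaussianReal 0 1) ∧
    ∫ x, Real.log |x| ∂(gaussianReal 0 1)
      = -(Real.eulerMascheroniConstant + Real.log 2) / 2 := by
  have hpdf : ∀ x : ℝ, gaussianPDFReal 0 1 x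
      = (Real.sqrt (2 * π))⁻¹ * Real.exp (-(1/2) * x ^ 2) := by
    intro x
    simp only [gaussianPDFReal, NNReal.coe_one, mul_one, sub_zero]
    congr 1
    ring_nf
  have hmeasure : gaussianReal 0 1 = volume.withDensity (gaussianPDF 0 1) :=
    gaussianReal_of_var_ne_zero 0 one_ne_zero
  have hpos : (0:ℝ) < (Real.sqrt (2 * π))⁻¹ := by
    rw [inv_pos]
    exact Real.sqrt_pos.mpr (by positivity)
  have hIntR : Integrable (fun x : ℝ => Real.log |x| * gaussianPDFReal 0 1 x) := by
    have h1 : Integrable (fun x : ℝ =>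
        (Real.sqrt (2 * π))⁻¹ * (Real.log |x| * Real.exp (-(1/2) * x ^ 2))) :=
      (integrable_log_abs_mul_exp (by norm_num : (0:ℝ) < 1/2)).const_mul _
    refine h1.congr (Filter.Eventually.of_forall fun x => ?_)
    simp only [hpdf]; ring
  have hInt : Integrable (fun x => Real.log |x|) (gaussianReal 0 1) := by
    rw [hmeasure]
    rw [integrable_withDensity_iff (measurable_gaussianPDF 0 1)
      (Filter.Eventually.of_forall fun x => ENNReal.ofReal_lt_top)]
    refine hIntR.congr (Filter.Eventually.of_forall fun x => ?_)
    simp only [gaussianPDF, ENNReal.toReal_ofReal (gaussianPDFReal_nonneg 0 1 x)]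
  refine ⟨hInt, ?_⟩
  rw [hmeasure]
  have hdens : gaussianPDF 0 1 = fun x => ((gaussianPDFReal 0 1 x).toNNReal : ENNReal) := rfl
  rw [hdens]
  rw [integral_withDensity_eq_integral_smul
    (by exact (measurable_gaussianPDFReal 0 1).real_toNNReal) _]
  have : ∀ x : ℝ, (gaussianPDFReal 0 1 x).toNNReal • Real.log |x|
      = (Real.sqrt (2 * π))⁻¹ * (Real.log |x| * Real.exp (-(1/2) * x ^ 2)) := by
    intro x
    rw [NNReal.smul_def, smul_eq_mul, Real.coe_toNNReal _ (gaussianPDFReal_nonneg 0 1 x),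
      hpdf x]
    ring
  rw [integral_congr_ae (Filter.Eventually.of_forall this), integral_const_mul, step3]
  rw [show Real.sqrt (2 * π) = Real.sqrt 2 * Real.sqrt π from Real.sqrt_mul (by norm_num) π]
  have h2 : Real.sqrt 2 * Real.sqrt π ≠ 0 := by positivity
  field_simp
end

section
/- Let $(\Omega,\mathcal F,\mu)$ be a probability space, $T:\Omega\to\Omega$ an ergodic measure-preserving map, and $A,B:\Omega\to\mathbb R$ measurable such that $\omega\mapsto\log|A(\omega)|$ is integrable with $\int_{\Omega}\log|A|\,d\mu<0$ and $\int_{\Omega}\log^{+}|B|\,d\mu<\infty$. Then for $\mu$-almost every $\omega$ the series $\sum_{k=0}^{\infty}\Big(\prod_{i=0}^{k-1}|A(T^i\omega)|\Big)\,|B(T^k\omega)|$ converges (to a finite value). -/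
open MeasureTheory Filter Topology

set_option linter.unusedSectionVars false
set_option linter.unusedVariables false

section ErgodicAux
variable {Ω : Type*} [MeasurableSpace Ω] {μ : Measure Ω} [IsProbabilityMeasure μ]
  {T : Ω → Ω} {g : Ω → ℝ}

variable {Ω : Type*} [MeasurableSpace Ω] {μ : Measure Ω} [IsProbabilityMeasure μ]
  {T : Ω → Ω} {g : Ω → ℝ}

/-- `maxBS n ω = max_{0 ≤ k ≤ n} S_k ω` where `S_k = birkhoffSum T g k`. -/
noncomputable def maxBS (T : Ω → Ω) (g : Ω → ℝ) (n : ℕ) (ω : Ω) : ℝ :=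
  (Finset.range (n + 1)).sup' Finset.nonempty_range_add_one (fun k => birkhoffSum T g k ω)

lemma le_maxBS {k n : ℕ} (hk : k ≤ n) (ω : Ω) : birkhoffSum T g k ω ≤ maxBS T g n ω :=
  Finset.le_sup' (fun k => birkhoffSum T g k ω) (Finset.mem_range.2 (Nat.lt_succ_of_le hk))

lemma maxBS_le {n : ℕ} {ω : Ω} {a : ℝ} (h : ∀ k ≤ n, birkhoffSum T g k ω ≤ a) :
    maxBS T g n ω ≤ a :=
  Finset.sup'_le _ _ fun k hk => h k (Nat.lt_succ_iff.1 (Finset.mem_range.1 hk))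

lemma exists_maxBS (n : ℕ) (ω : Ω) : ∃ k ≤ n, maxBS T g n ω = birkhoffSum T g k ω := by
  obtain ⟨k, hk, hke⟩ := Finset.exists_mem_eq_sup' (Finset.nonempty_range_add_one (n := n))
    (fun k => birkhoffSum T g k ω)
  exact ⟨k, Nat.lt_succ_iff.1 (Finset.mem_range.1 hk), hke⟩

lemma maxBS_nonneg (n : ℕ) (ω : Ω) : 0 ≤ maxBS T g n ω := by
  simpa [birkhoffSum_zero] using le_maxBS (Nat.zero_le n) ω (g := g)

lemma maxBS_mono {m n : ℕ} (hmn : m ≤ n) (ω : Ω) : maxBS T g m ω ≤ maxBS T g n ω :=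
  maxBS_le fun k hk => le_maxBS (hk.trans hmn) ω

lemma maxBS_key {n : ℕ} {ω : Ω} (h : 0 < maxBS T g n ω) :
    maxBS T g n ω ≤ g ω + maxBS T g n (T ω) := by
  obtain ⟨k, hk, hke⟩ := exists_maxBS (T := T) (g := g) n ω
  rcases k with _ | j
  · rw [hke, birkhoffSum_zero] at h; exact absurd h (lt_irrefl 0)
  · calc maxBS T g n ω = g ω + birkhoffSum T g j (T ω) := by
          rw [hke]; exact birkhoffSum_succ' T g j ω
      _ ≤ g ω + maxBS T g n (T ω) := by
          gcongr; exact le_maxBS (by omega) (T ω)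

lemma measurable_birkhoffSum (hT : Measurable T) (hg : Measurable g) (n : ℕ) :
    Measurable (birkhoffSum T g n) :=
  Finset.measurable_sum _ fun i _ => hg.comp (hT.iterate i)

lemma maxBS_zero : maxBS T g 0 = birkhoffSum T g 0 := by
  funext ω
  refine le_antisymm (maxBS_le fun k hk => ?_) (le_maxBS le_rfl ω)
  rw [Nat.le_zero.1 hk]

lemma maxBS_succ_eq (n : ℕ) :
    maxBS T g (n + 1) = fun ω => maxBS T g n ω ⊔ birkhoffSum T g (n + 1) ω := by
  funext ω
  refine le_antisymm (maxBS_le fun k hk => ?_) (sup_le (maxBS_mono n.le_succ ω)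
    (le_maxBS le_rfl ω))
  rcases Nat.lt_or_ge k (n + 1) with h | h
  · exact (le_maxBS (Nat.lt_succ_iff.1 h) ω).trans le_sup_left
  · rw [le_antisymm hk h]; exact le_sup_right

lemma measurable_maxBS (hT : Measurable T) (hg : Measurable g) (n : ℕ) :
    Measurable (maxBS T g n) := by
  induction n with
  | zero => rw [maxBS_zero]; exact measurable_birkhoffSum hT hg 0
  | succ n ih => rw [maxBS_succ_eq]; exact ih.sup (measurable_birkhoffSum hT hg (n + 1))

lemma integrable_comp_iterate (hT : MeasurePreserving T μ μ) (hg : Integrable g μ) (i : ℕ) :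
    Integrable (fun ω => g (T^[i] ω)) μ := by
  have h1 : Integrable g (Measure.map T^[i] μ) := by rw [(hT.iterate i).map_eq]; exact hg
  exact h1.comp_measurable (hT.measurable.iterate i)

lemma integrable_birkhoffSum (hT : MeasurePreserving T μ μ) (hg : Integrable g μ) (n : ℕ) :
    Integrable (birkhoffSum T g n) μ :=
  integrable_finset_sum _ fun i _ => integrable_comp_iterate hT hg i

lemma integrable_maxBS (hT : MeasurePreserving T μ μ) (hg : Integrable g μ) (n : ℕ) :
    Integrable (maxBS T g n) μ := by
  induction n with
  | zero => rw [maxBS_zero]; exact integrable_birkhoffSum hT hg 0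
  | succ n ih => rw [maxBS_succ_eq]; exact ih.sup (integrable_birkhoffSum hT hg (n + 1))

/-- **Maximal ergodic theorem**, special case: if a.e. some Birkhoff sum is positive,
then the integral of `g` is nonnegative. -/
theorem maximal_ergodic (hT : MeasurePreserving T μ μ) (hgm : Measurable g)
    (hg : Integrable g μ) (hpos : ∀ᵐ ω ∂μ, ∃ k, 0 < birkhoffSum T g k ω) :
    0 ≤ ∫ ω, g ω ∂μ := by
  set E : ℕ → Set Ω := fun n => {ω | 0 < maxBS T g n ω} with hE
  have hEm : ∀ n, MeasurableSet (E n) :=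
    fun n => measurableSet_lt measurable_const (measurable_maxBS hT.measurable hgm n)
  have hmono : Monotone E := fun m n hmn ω hω => lt_of_lt_of_le hω (maxBS_mono hmn ω)
  -- Step 1: for each n, `0 ≤ ∫_{E n} g`.
  have step1 : ∀ n, 0 ≤ ∫ ω in E n, g ω ∂μ := by
    intro n
    have hMi := integrable_maxBS hT hg n
    have hMTi : Integrable (fun ω => maxBS T g n (T ω)) μ := by
      have h1 : Integrable (maxBS T g n) (Measure.map T μ) := by rw [hT.map_eq]; exact hMi
      exact h1.comp_measurable hT.measurable
    -- pointwise: maxBS n - maxBS n ∘ T ≤ indicator (E n) g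
    have hpt : ∀ ω, maxBS T g n ω - maxBS T g n (T ω) ≤ (E n).indicator g ω := by
      intro ω
      by_cases hω : ω ∈ E n
      · rw [Set.indicator_of_mem hω]
        have := maxBS_key (hω : 0 < maxBS T g n ω)
        linarith
      · rw [Set.indicator_of_notMem hω]
        have h1 : maxBS T g n ω ≤ 0 := not_lt.1 hω
        have h2 : 0 ≤ maxBS T g n (T ω) := maxBS_nonneg n (T ω)
        linarith
    have hInd : Integrable ((E n).indicator g) μ := hg.indicator (hEm n)
    have hint : ∫ ω, (maxBS T g n ω - maxBS T g n (T ω)) ∂μ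
        ≤ ∫ ω, (E n).indicator g ω ∂μ :=
      integral_mono (hMi.sub hMTi) hInd hpt
    have hzero : ∫ ω, (maxBS T g n ω - maxBS T g n (T ω)) ∂μ = 0 := by
      rw [integral_sub hMi hMTi]
      have : ∫ ω, maxBS T g n (T ω) ∂μ = ∫ ω, maxBS T g n ω ∂μ := by
        calc ∫ ω, maxBS T g n (T ω) ∂μ
            = ∫ ω, maxBS T g n ω ∂(Measure.map T μ) :=
              (integral_map hT.measurable.aemeasurable (by rw [hT.map_eq]; exact hMi.1)).symm
          _ = ∫ ω, maxBS T g n ω ∂μ := by rw [hT.map_eq]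
      rw [this, sub_self]
    rw [hzero] at hint
    rwa [integral_indicator (hEm n)] at hint
  -- Step 2: E n ↑ a set of full measure
  have hsub : {ω | ∃ k, 0 < birkhoffSum T g k ω} ⊆ ⋃ n, E n := by
    rintro ω ⟨k, hk⟩
    exact Set.mem_iUnion.2 ⟨k, lt_of_lt_of_le hk (le_maxBS le_rfl ω)⟩
  have hfull : (⋃ n, E n) =ᵐ[μ] Set.univ := by
    rw [Filter.eventuallyEq_univ]
    exact Filter.mem_of_superset (hpos : {ω | ∃ k, 0 < birkhoffSum T g k ω} ∈ ae μ) hsub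
  have hlim : Tendsto (fun n => ∫ ω in E n, g ω ∂μ) atTop (𝓝 (∫ ω in ⋃ n, E n, g ω ∂μ)) :=
    tendsto_setIntegral_of_monotone hEm hmono (hg.integrableOn)
  have : ∫ ω in ⋃ n, E n, g ω ∂μ = ∫ ω, g ω ∂μ := by
    rw [Measure.restrict_congr_set hfull, Measure.restrict_univ]
  rw [this] at hlim
  exact ge_of_tendsto' hlim step1

/-- If `T` is ergodic and `∫ g < 0`, then a.e. the Birkhoff sums of `g` are bounded above. -/
theorem ae_bddAbove_birkhoffSum (hT : Ergodic T μ) (hgm : Measurable g)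
    (hg : Integrable g μ) (hneg : ∫ ω, g ω ∂μ < 0) :
    ∀ᵐ ω ∂μ, ∃ C : ℝ, ∀ n, birkhoffSum T g n ω ≤ C := by
  set Gc : Set Ω := {ω | ∃ C : ℝ, ∀ n, birkhoffSum T g n ω ≤ C} with hGc
  have hGceq : Gc = ⋃ (q : ℚ), ⋂ n, {ω | birkhoffSum T g n ω ≤ (q : ℝ)} := by
    ext ω
    simp only [Set.mem_setOf_eq, Set.mem_iUnion, Set.mem_iInter, hGc]
    constructor
    · rintro ⟨C, hC⟩
      obtain ⟨q, hq⟩ := exists_rat_gt C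
      exact ⟨q, fun n => (hC n).trans hq.le⟩
    · rintro ⟨q, hq⟩; exact ⟨q, hq⟩
  have hGm : MeasurableSet Gc := by
    rw [hGceq]
    exact MeasurableSet.iUnion fun q => MeasurableSet.iInter fun n =>
      measurableSet_le (measurable_birkhoffSum hT.measurable hgm n) measurable_const
  have hinv : T ⁻¹' Gc = Gc := by
    ext ω
    simp only [Set.mem_preimage, Set.mem_setOf_eq, hGc]
    constructor
    · rintro ⟨C, hC⟩
      refine ⟨max 0 (g ω + C), fun n => ?_⟩
      rcases n with _ | m
      · simp [birkhoffSum_zero]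
      · rw [birkhoffSum_succ']
        have := hC m
        calc g ω + birkhoffSum T g m (T ω) ≤ g ω + C := by linarith
          _ ≤ max 0 (g ω + C) := le_max_right _ _
    · rintro ⟨C, hC⟩
      refine ⟨C - g ω, fun n => ?_⟩
      have := hC (n + 1)
      rw [birkhoffSum_succ'] at this
      linarith
  rcases hT.toPreErgodic.prob_eq_zero_or_one hGm hinv with h0 | h1
  · -- measure 0: a.e. sup unbounded, contradiction with maximal ergodic theorem
    exfalso
    have hae : ∀ᵐ ω ∂μ, ∃ k, 0 < birkhoffSum T g k ω := by
      have : ∀ᵐ ω ∂μ, ω ∈ Gcᶜ := by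
        rw [ae_iff]
        simpa [compl_compl] using h0
      filter_upwards [this] with ω hω
      simp only [Set.mem_compl_iff, Set.mem_setOf_eq, hGc, not_exists, not_forall,
        not_le] at hω
      obtain ⟨n, hn⟩ := hω 0
      exact ⟨n, hn⟩
    exact absurd (maximal_ergodic hT.toMeasurePreserving hgm hg hae) (not_le.2 hneg)
  · rw [← prob_compl_eq_zero_iff hGm] at h1
    have heq : {ω | ¬ ∃ C : ℝ, ∀ n, birkhoffSum T g n ω ≤ C} = Gcᶜ := rfl
    rw [ae_iff, heq]
    exact h1

/-- Borel–Cantelli: for an integrable nonnegative `f` and measure-preserving `T`,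
a.e. `f (T^[k] ω) ≤ ε * k` eventually. -/
theorem ae_eventually_le_linear (hT : MeasurePreserving T μ μ) {f : Ω → ℝ}
    (hfm : Measurable f) (hfi : Integrable f μ) (hf0 : 0 ≤ f) {ε : ℝ} (hε : 0 < ε) :
    ∀ᵐ ω ∂μ, ∀ᶠ k in atTop, f (T^[k] ω) ≤ ε * k := by
  letI : MeasureSpace Ω := ⟨μ⟩
  set s : ℕ → Set Ω := fun k => T^[k] ⁻¹' {ω | f ω / ε ∈ Set.Ioi (k : ℝ)} with hs
  have hmeas : ∀ k : ℕ, MeasurableSet {ω | f ω / ε ∈ Set.Ioi (k : ℝ)} := fun k =>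
    (hfm.div_const ε) measurableSet_Ioi
  have htsum : (∑' k, μ (s k)) ≠ ⊤ := by
    have heq : ∀ k, μ (s k) = μ {ω | f ω / ε ∈ Set.Ioi (k : ℝ)} := fun k =>
      (hT.iterate k).measure_preimage (hmeas k).nullMeasurableSet
    have hlt : (∑' k : ℕ, μ {ω | f ω / ε ∈ Set.Ioi (k : ℝ)}) < ⊤ :=
      ProbabilityTheory.tsum_prob_mem_Ioi_lt_top (hfi.div_const ε)
        (fun ω => div_nonneg (hf0 ω) hε.le)
    rw [tsum_congr heq]
    exact hlt.ne
  filter_upwards [ae_eventually_notMem htsum] with ω hω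
  filter_upwards [hω] with k hk
  simp only [hs, Set.mem_preimage, Set.mem_setOf_eq, Set.mem_Ioi, not_lt] at hk
  calc f (T^[k] ω) = f (T^[k] ω) / ε * ε := by field_simp
    _ ≤ (k : ℝ) * ε := by gcongr
    _ = ε * k := mul_comm _ _


end ErgodicAux

/-- If `T` is ergodic measure-preserving, `log |A|` is integrable with negative mean, and
`𝔼[log⁺ |B|] < ∞`, then the series `∑ₖ (∏_{i<k} |A (Tⁱ ω)|) |B (Tᵏ ω)|` converges
almost surely. -/
theorem summable_prod_abs_mul_abs
    {Ω : Type*} [MeasurableSpace Ω] (μ : Measure Ω) [IsProbabilityMeasure μ]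
    (T : Ω → Ω) (hT : Ergodic T μ)
    (A B : Ω → ℝ) (hA : Measurable A) (hB : Measurable B)
    (hlogA_int : Integrable (fun ω => Real.log |A ω|) μ)
    (hlogA_neg : ∫ ω, Real.log |A ω| ∂μ < 0)
    (hlogB : Integrable (fun ω => max (Real.log |B ω|) 0) μ) :
    ∀ᵐ ω ∂μ, Summable (fun k : ℕ =>
      (∏ i ∈ Finset.range k, |A (T^[i] ω)|) * |B (T^[k] ω)|) := by
  set g : Ω → ℝ := fun ω => Real.log |A ω| with hg
  set c : ℝ := ∫ ω, g ω ∂μ with hc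
  have hcneg : c < 0 := hlogA_neg
  have hgm : Measurable g := Real.measurable_log.comp hA.abs
  -- the shifted function h = g - c/2
  set h : Ω → ℝ := fun ω => g ω - c / 2 with hh
  have hhm : Measurable h := hgm.sub measurable_const
  have hhi : Integrable h μ := hlogA_int.sub (integrable_const _)
  have hhneg : ∫ ω, h ω ∂μ < 0 := by
    rw [hh]
    rw [integral_sub hlogA_int (integrable_const _), integral_const]
    simp only [measure_univ, ENNReal.toReal_one, one_smul, probReal_univ]
    rw [← hc]
    linarith
  have AE1 := ae_bddAbove_birkhoffSum hT hhm hhi hhneg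
  -- Borel–Cantelli for f = log⁺ |B|
  set f : Ω → ℝ := fun ω => max (Real.log |B ω|) 0 with hf
  have hfm : Measurable f := (Real.measurable_log.comp hB.abs).max measurable_const
  have hf0 : 0 ≤ f := fun ω => le_max_right _ _
  have hεpos : 0 < -c / 4 := by linarith
  have AE2 := ae_eventually_le_linear hT.toMeasurePreserving hfm hlogB hf0 hεpos
  filter_upwards [AE1, AE2] with ω hC hev
  obtain ⟨C, hC⟩ := hC
  -- birkhoffSum of h in terms of g
  have hbs : ∀ k : ℕ, birkhoffSum T h k ω = birkhoffSum T g k ω - k * (c / 2) := by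
    intro k
    simp only [birkhoffSum, hh, Finset.sum_sub_distrib, Finset.sum_const,
      Finset.card_range, nsmul_eq_mul]
  -- pointwise bound of the term by an exponential
  have hterm : ∀ k : ℕ, (∏ i ∈ Finset.range k, |A (T^[i] ω)|) * |B (T^[k] ω)|
      ≤ Real.exp (birkhoffSum T g k ω + f (T^[k] ω)) := by
    intro k
    rw [Real.exp_add]
    have h1 : (∏ i ∈ Finset.range k, |A (T^[i] ω)|) ≤ Real.exp (birkhoffSum T g k ω) := by
      rw [birkhoffSum, Real.exp_sum]
      exact Finset.prod_le_prod (fun i _ => abs_nonneg _)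
        (fun i _ => Real.le_exp_log _)
    have h2 : |B (T^[k] ω)| ≤ Real.exp (f (T^[k] ω)) :=
      (Real.le_exp_log _).trans (Real.exp_le_exp.2 (le_max_left _ _))
    exact mul_le_mul h1 h2 (abs_nonneg _) (Real.exp_nonneg _)
  -- eventually the exponential bound is geometric
  obtain ⟨K, hK⟩ := hev.exists_forall_of_atTop
  set r : ℝ := Real.exp (c / 4) with hr
  have hr0 : 0 ≤ r := Real.exp_nonneg _
  have hr1 : r < 1 := Real.exp_lt_one_iff.2 (by linarith)
  have hbound : ∀ k ≥ K, (∏ i ∈ Finset.range k, |A (T^[i] ω)|) * |B (T^[k] ω)|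
      ≤ Real.exp C * r ^ k := by
    intro k hk
    refine (hterm k).trans ?_
    rw [← Real.exp_nat_mul, ← Real.exp_add]
    apply Real.exp_le_exp.2
    have h1 : birkhoffSum T g k ω ≤ C + k * (c / 2) := by
      have := hC k; rw [hbs k] at this; linarith
    have h2 : f (T^[k] ω) ≤ -c / 4 * k := hK k hk
    have : (k : ℝ) * (c / 4) = k * (c/2) + (-c/4) * k := by ring
    linarith [this]
  -- conclude summability
  have hnonneg : ∀ k : ℕ, 0 ≤ (∏ i ∈ Finset.range k, |A (T^[i] ω)|) * |B (T^[k] ω)| :=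
    fun k => mul_nonneg (Finset.prod_nonneg fun i _ => abs_nonneg _) (abs_nonneg _)
  rw [← summable_nat_add_iff K]
  apply Summable.of_nonneg_of_le (fun k => hnonneg (k + K))
    (fun k => hbound (k + K) (Nat.le_add_left K k))
  exact ((summable_geometric_of_lt_one hr0 hr1).mul_left (Real.exp C)).comp_injective
    (add_left_injective K)
end

section
/- Let $(\Omega,\mathcal F,\mu)$ be a probability space, $T:\Omega\to\Omega$ an ergodic measure-preserving map, and $A,B:\Omega\to\mathbb R$ measurable such that $\prod_{i=0}^{n-1}|A(T^i\omega)|\to 0$ as $n\to\infty$ for $\mu$-almost every $\omega$. If $X,X':\Omega\to\mathbb R$ are measurable functions both satisfying $X(T\omega)=A(T\omega)|X(\omega)|+B(T\omega)$ and $X'(T\omega)=A(T\omega)|X'(\omega)|+B(T\omega)$ for $\mu$-almost every $\omega$, then $X=X'$ $\mu$-almost everywhere. -/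
/-!
The map `x ↦ a * |x| + b` is `|a|`-Lipschitz, so along an orbit the distance
`|X - X'|` is dominated by `∏ |A ∘ Tⁱ| * |X - X'|`, which tends to `0` almost surely.
A measure-preserving map of a probability space is conservative, so by Poincaré recurrence
a measurable function whose values along almost every orbit tend to `c` equals `c` a.e.
-/

open MeasureTheory Filter Topology

theorem abs_sub_le_abs_mul_abs_sub_of_affine_abs (a b x y : ℝ) :
    |(a * |x| + b) - (a * |y| + b)| ≤ |a| * |x - y| := by
  rw [add_sub_add_right_eq_sub, ← mul_sub, abs_mul]
  exact mul_le_mul_of_nonneg_left (abs_abs_sub_abs_le_abs_sub x y) (abs_nonneg a)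

theorem le_prod_range_mul_of_le_mul {d a : ℕ → ℝ} (ha : ∀ n, 0 ≤ a n)
    (hd : ∀ n, d (n + 1) ≤ a n * d n) (n : ℕ) :
    d n ≤ (∏ i ∈ Finset.range n, a i) * d 0 := by
  induction n with
  | zero => simp
  | succ n ih =>
    calc d (n + 1) ≤ a n * d n := hd n
      _ ≤ a n * ((∏ i ∈ Finset.range n, a i) * d 0) := mul_le_mul_of_nonneg_left ih (ha n)
      _ = (∏ i ∈ Finset.range (n + 1), a i) * d 0 := by rw [Finset.prod_range_succ]; ring

theorem tendsto_zero_of_le_mul_of_tendsto_prod {d a : ℕ → ℝ} (hd₀ : ∀ n, 0 ≤ d n)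
    (ha : ∀ n, 0 ≤ a n) (hd : ∀ n, d (n + 1) ≤ a n * d n)
    (hprod : Tendsto (fun n => ∏ i ∈ Finset.range n, a i) atTop (𝓝 0)) :
    Tendsto d atTop (𝓝 0) :=
  squeeze_zero hd₀ (le_prod_range_mul_of_le_mul ha hd) (by simpa using hprod.mul_const (d 0))

namespace MeasureTheory.Conservative

variable {Ω : Type*} [MeasurableSpace Ω] {μ : Measure Ω} {T : Ω → Ω}

theorem measure_eq_zero_of_ae_eventually_notMem (hT : Conservative T μ) {s : Set Ω}
    (hs : NullMeasurableSet s μ) (h : ∀ᵐ ω ∂μ, ∀ᶠ n in atTop, T^[n] ω ∉ s) : μ s = 0 := by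
  rw [measure_eq_zero_iff_ae_notMem]
  filter_upwards [hT.ae_mem_imp_frequently_image_mem hs, h] with ω hfreq hleave hω
  exact hfreq hω hleave

theorem ae_eq_of_ae_tendsto_iterate (hT : Conservative T μ) {E : Type*}
    [MetricSpace E] [MeasurableSpace E] [OpensMeasurableSpace E] {f : Ω → E} {c : E}
    (hf : Measurable f) (h : ∀ᵐ ω ∂μ, Tendsto (fun n => f (T^[n] ω)) atTop (𝓝 c)) :
    ∀ᵐ ω ∂μ, f ω = c := by
  set s : ℕ → Set Ω := fun k => {ω | 1 / ((k : ℝ) + 1) ≤ dist (f ω) c}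
  have hs_null : ∀ k, μ (s k) = 0 := fun k => by
    refine hT.measure_eq_zero_of_ae_eventually_notMem ?_ ?_
    · exact (hf (isClosed_le continuous_const
        (continuous_id.dist continuous_const)).measurableSet).nullMeasurableSet
    · filter_upwards [h] with ω hω
      filter_upwards [Metric.tendsto_nhds.1 hω _ Nat.one_div_pos_of_nat] with n hn
      exact not_le.2 hn
  filter_upwards [measure_iUnion_null_iff.2 hs_null |> measure_eq_zero_iff_ae_notMem.1]
    with ω hω
  by_contra hne
  obtain ⟨k, hk⟩ := exists_nat_one_div_lt (dist_pos.2 hne)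
  exact hω (Set.mem_iUnion.2 ⟨k, hk.le⟩)

end MeasureTheory.Conservative

theorem abs_sre_stationary_solution_unique_general
    {Ω : Type*} [MeasurableSpace Ω] (μ : Measure Ω) [IsProbabilityMeasure μ]
    (T : Ω → Ω) (hT : Ergodic T μ)
    (A B : Ω → ℝ)
    (hprod : ∀ᵐ ω ∂μ, Tendsto (fun n => ∏ i ∈ Finset.range n, |A (T^[i] ω)|)
      atTop (nhds 0))
    (X X' : Ω → ℝ) (hX : Measurable X) (hX' : Measurable X')
    (hXeq : ∀ᵐ ω ∂μ, X (T ω) = A (T ω) * |X ω| + B (T ω))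
    (hX'eq : ∀ᵐ ω ∂μ, X' (T ω) = A (T ω) * |X' ω| + B (T ω)) :
    X =ᵐ[μ] X' := by
  have hmp : MeasurePreserving T μ μ := hT.toMeasurePreserving
  have hcontract : ∀ᵐ ω ∂μ, |X (T ω) - X' (T ω)| ≤ |A (T ω)| * |X ω - X' ω| := by
    filter_upwards [hXeq, hX'eq] with ω h h'
    rw [h, h']
    exact abs_sub_le_abs_mul_abs_sub_of_affine_abs _ _ _ _
  have hcontract_orbit := ae_all_iff.2 fun n => (hmp.iterate n).quasiMeasurePreserving.ae hcontract
  have hprod_shift := hmp.quasiMeasurePreserving.ae hprod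
  have horbit : ∀ᵐ ω ∂μ, Tendsto (fun n => |X (T^[n] ω) - X' (T^[n] ω)|) atTop (𝓝 0) := by
    filter_upwards [hcontract_orbit, hprod_shift] with ω hc hp
    refine tendsto_zero_of_le_mul_of_tendsto_prod (a := fun i => |A (T (T^[i] ω))|)
      (fun _ => abs_nonneg _) (fun _ => abs_nonneg _) (fun n => ?_) ?_
    · simpa only [Function.iterate_succ_apply'] using hc n
    · simpa only [← Function.iterate_succ_apply, Function.iterate_succ_apply'] using hp
  filter_upwards [hmp.conservative.ae_eq_of_ae_tendsto_iterate (hX.sub hX').abs horbit]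
    with ω hω
  exact sub_eq_zero.1 (abs_eq_zero.1 hω)

/-- Uniqueness of stationary solutions of the stochastic recurrence equation with
absolute value: if the products `∏_{i<n} |A (Tⁱ ω)|` tend to `0` almost surely, then any
two measurable solutions of `X ∘ T = (A ∘ T) * |X| + B ∘ T` (a.e.) agree almost
everywhere. -/
theorem abs_sre_stationary_solution_unique
    {Ω : Type*} [MeasurableSpace Ω] (μ : Measure Ω) [IsProbabilityMeasure μ]
    (T : Ω → Ω) (hT : Ergodic T μ)
    (A B : Ω → ℝ) (hA : Measurable A) (hB : Measurable B)
    (hprod : ∀ᵐ ω ∂μ, Tendsto (fun n => ∏ i ∈ Finset.range n, |A (T^[i] ω)|)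
      atTop (nhds 0))
    (X X' : Ω → ℝ) (hX : Measurable X) (hX' : Measurable X')
    (hXeq : ∀ᵐ ω ∂μ, X (T ω) = A (T ω) * |X ω| + B (T ω))
    (hX'eq : ∀ᵐ ω ∂μ, X' (T ω) = A (T ω) * |X' ω| + B (T ω)) :
    X =ᵐ[μ] X' :=
  abs_sre_stationary_solution_unique_general μ T hT A B hprod X X' hX hX' hXeq hX'eq
end
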